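/- Let P be the L² orthogonal projection from L²(a,b) onto polynomials of degree ≤ k. Then for every z ∈ H^{k+1}(a,b), ‖z − Pz‖_{L²(a,b)} ≤ C (b−a)^{k+1} ‖z^{(k+1)}‖_{L²(a,b)}, with C depending only on k. -/

import Mathlib

open MeasureTheory intervalIntegral Set Polynomial

/-- Cauchy–Schwarz on an interval for a continuous function. -/
lemma aux_cs {a b : ℝ} (hab : a ≤ b) {g : ℝ → ℝ} (hg : Continuous g) :
    (∫ t in a..b, |g t|) ≤ Real.sqrt (b - a) * Real.sqrt (∫ t in a..b, g t ^ 2) := by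
  set μ : Measure ℝ := volume.restrict (Set.Ioc a b) with hμ
  haveI : IsFiniteMeasure μ := by
    constructor
    rw [hμ, Measure.restrict_apply_univ, Real.volume_Ioc]
    exact ENNReal.ofReal_lt_top
  obtain ⟨C, hC⟩ := (isCompact_Icc (a := a) (b := b)).exists_bound_of_continuousOn
    hg.continuousOn
  have hmem : ∀ f : ℝ → ℝ, AEStronglyMeasurable f μ → (∀ t ∈ Set.Ioc a b, ‖f t‖ ≤ max C 1) →
      MemLp f (ENNReal.ofReal 2) μ := by
    intro f hfm hfb
    refine MemLp.of_bound hfm (max C 1) ?_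
    rw [hμ, ae_restrict_iff' measurableSet_Ioc]
    exact ae_of_all _ hfb
  have hpq : (2 : ℝ).HolderConjugate 2 := Real.holderConjugate_iff.mpr ⟨one_lt_two, by norm_num⟩
  have h1 : MemLp (fun t => |g t|) (ENNReal.ofReal 2) μ := by
    refine hmem _ hg.abs.aestronglyMeasurable fun t ht => ?_
    rw [Real.norm_eq_abs, abs_abs]
    exact le_max_of_le_left ((Real.norm_eq_abs (g t)) ▸ hC t (Ioc_subset_Icc_self ht))
  have h2 : MemLp (fun _ : ℝ => (1 : ℝ)) (ENNReal.ofReal 2) μ := by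
    refine hmem _ aestronglyMeasurable_const fun t _ => ?_
    simp
  have := integral_mul_le_Lp_mul_Lq_of_nonneg hpq
    (μ := μ) (f := fun t => |g t|) (g := fun _ => (1:ℝ))
    (ae_of_all _ fun t => abs_nonneg _) (ae_of_all _ fun _ => zero_le_one) h1 h2
  simp only [mul_one, Real.one_rpow] at this
  rw [intervalIntegral.integral_of_le hab, intervalIntegral.integral_of_le hab]
  calc ∫ t in Set.Ioc a b, |g t| = ∫ t, |g t| ∂μ := rfl
    _ ≤ (∫ t, |g t| ^ (2:ℝ) ∂μ) ^ (1/(2:ℝ)) * (∫ _t, (1:ℝ) ∂μ) ^ (1/(2:ℝ)) := this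
    _ = Real.sqrt (b - a) * Real.sqrt (∫ t in Set.Ioc a b, g t ^ 2) := by
        have e1 : ∀ t : ℝ, |g t| ^ (2:ℝ) = g t ^ 2 := by
          intro t
          rw [show (2:ℝ) = ((2:ℕ):ℝ) by norm_num, Real.rpow_natCast, sq_abs]
        simp only [e1]
        rw [MeasureTheory.integral_const, hμ, measureReal_def, Measure.restrict_apply_univ, Real.volume_Ioc,
          ENNReal.toReal_ofReal (by linarith), smul_eq_mul, mul_one,
          Real.sqrt_eq_rpow, Real.sqrt_eq_rpow, mul_comm]

/-- Integral form of the Taylor remainder for globally smooth functions. -/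
lemma aux_taylor (k : ℕ) {z : ℝ → ℝ} (hz : ContDiff ℝ (k + 1) z) (a x : ℝ) :
    z x - taylorWithinEval z k Set.univ a x
      = ∫ t in a..x, ((k.factorial : ℝ)⁻¹ * (x - t) ^ k) * iteratedDeriv (k + 1) z t := by
  have hder : ∀ t : ℝ, HasDerivAt (fun y => taylorWithinEval z k Set.univ y x)
      (((k.factorial : ℝ)⁻¹ * (x - t) ^ k) * iteratedDeriv (k + 1) z t) t := by
    intro t
    have h := hasDerivWithinAt_taylorWithinEval (f := z) (x := x) (y := t) (n := k)
      (s := Set.univ) (s' := Set.univ) uniqueDiffOn_univ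
      (Filter.univ_mem) (Set.mem_univ t) (subset_refl _)
      (contDiffOn_univ.mpr (hz.of_le (m := k) (by exact_mod_cast Nat.le_succ k)))
      (by
        rw [iteratedDerivWithin_univ]
        exact ((hz.differentiable_iteratedDeriv k
          (by exact_mod_cast Nat.lt_succ_self k)) t).differentiableWithinAt)
    rw [← hasDerivWithinAt_univ]
    simpa [iteratedDerivWithin_univ, smul_eq_mul] using h
  have hcont : Continuous fun t => ((k.factorial : ℝ)⁻¹ * (x - t) ^ k) * iteratedDeriv (k + 1) z t := by
    have := hz.continuous_iteratedDeriv (k + 1) (by exact_mod_cast le_refl (k+1))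
    fun_prop
  have := intervalIntegral.integral_eq_sub_of_hasDerivAt
    (f := fun y => taylorWithinEval z k Set.univ y x)
    (fun t _ => hder t) (hcont.intervalIntegrable a x)
  rw [this]
  simp [taylorWithinEval_self]

/-- L² projection error on an interval: if p is the L²(a,b)-orthogonal projection
of z onto polynomials of degree ≤ k, and z is (k+1)-times continuously
differentiable, then ‖z − Pz‖_{L²} ≤ C (b−a)^{k+1} ‖z^{(k+1)}‖_{L²}, C = C(k). -/
theorem stmt_7 (k : ℕ) :
    ∃ C > 0, ∀ (a b : ℝ), a < b → ∀ z : ℝ → ℝ, ContDiff ℝ (k + 1) z →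
      ∀ p : Polynomial ℝ, p.natDegree ≤ k →
        (∀ q : Polynomial ℝ, q.natDegree ≤ k →
          (∫ x in a..b, (z x - p.eval x) * q.eval x) = 0) →
        Real.sqrt (∫ x in a..b, (z x - p.eval x) ^ 2) ≤
          C * (b - a) ^ (k + 1) *
            Real.sqrt (∫ x in a..b, (iteratedDeriv (k + 1) z x) ^ 2) := by
  refine ⟨(k.factorial : ℝ)⁻¹, by positivity, ?_⟩
  intro a b hab z hz p hp horth
  have hba : (0:ℝ) ≤ b - a := by linarith
  set g : ℝ → ℝ := iteratedDeriv (k + 1) z with hgdef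
  have hgc : Continuous g := hz.continuous_iteratedDeriv (k + 1) (by exact_mod_cast le_refl (k+1))
  have hzc : Continuous z := hz.continuous
  set V : ℝ := ∫ x in a..b, g x ^ 2 with hVdef
  have hV0 : 0 ≤ V := intervalIntegral.integral_nonneg hab.le fun u _ => sq_nonneg _
  set I : ℝ := ∫ t in a..b, |g t| with hIdef
  have hI0 : 0 ≤ I := intervalIntegral.integral_nonneg hab.le fun u _ => abs_nonneg _
  have hI2 : I ^ 2 ≤ (b - a) * V := by
    have hcs := aux_cs hab.le hgc
    have h2 : I ^ 2 ≤ (Real.sqrt (b - a) * Real.sqrt V) ^ 2 := by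
      apply pow_le_pow_left₀ hI0
      exact hcs
    calc I ^ 2 ≤ (Real.sqrt (b - a) * Real.sqrt V) ^ 2 := h2
      _ = (b - a) * V := by
          rw [mul_pow, Real.sq_sqrt hba, Real.sq_sqrt hV0]
  -- the Taylor polynomial of z at a, as a `Polynomial ℝ`
  set q : Polynomial ℝ := ∑ i ∈ Finset.range (k + 1),
      Polynomial.C ((i.factorial : ℝ)⁻¹ * iteratedDeriv i z a)
        * (Polynomial.X - Polynomial.C a) ^ i with hqdef
  have hqc : Continuous fun x => q.eval x := q.continuous
  have hpc : Continuous fun x => p.eval x := p.continuous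
  have hqdeg : q.natDegree ≤ k := by
    apply Polynomial.natDegree_sum_le_of_forall_le
    intro i hi
    refine (Polynomial.natDegree_mul_le).trans ?_
    simp only [Polynomial.natDegree_C, Polynomial.natDegree_pow,
      Polynomial.natDegree_X_sub_C, zero_add, mul_one]
    have := Finset.mem_range.mp hi
    omega
  have hqeval : ∀ x, q.eval x = taylorWithinEval z k Set.univ a x := by
    intro x
    rw [taylor_within_apply, hqdef]
    simp only [Polynomial.eval_finset_sum, Polynomial.eval_mul, Polynomial.eval_pow,
      Polynomial.eval_sub, Polynomial.eval_X, Polynomial.eval_C, iteratedDerivWithin_univ,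
      smul_eq_mul]
    exact Finset.sum_congr rfl fun i _ => by ring
  set c : ℝ := (k.factorial : ℝ)⁻¹ * (b - a) ^ k with hcdef
  have hc0 : 0 ≤ c := by positivity
  -- pointwise bound on the Taylor remainder
  have hpt : ∀ x ∈ Set.Icc a b, |z x - q.eval x| ≤ c * I := by
    intro x hx
    rw [hqeval, aux_taylor k hz a x]
    have hhc : Continuous fun t => ((k.factorial : ℝ)⁻¹ * (x - t) ^ k) * g t := by fun_prop
    have habs : Continuous fun t => |((k.factorial : ℝ)⁻¹ * (x - t) ^ k) * g t| := hhc.abs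
    calc |∫ t in a..x, ((k.factorial : ℝ)⁻¹ * (x - t) ^ k) * g t|
        ≤ ∫ t in a..x, |((k.factorial : ℝ)⁻¹ * (x - t) ^ k) * g t| :=
          intervalIntegral.abs_integral_le_integral_abs hx.1
      _ ≤ ∫ t in a..b, |((k.factorial : ℝ)⁻¹ * (x - t) ^ k) * g t| := by
          apply intervalIntegral.integral_mono_interval le_rfl hx.1 hx.2
          · exact ae_of_all _ fun t => abs_nonneg _
          · exact habs.intervalIntegrable a b
      _ ≤ ∫ t in a..b, c * |g t| := by
          apply intervalIntegral.integral_mono_on hab.le (habs.intervalIntegrable a b)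
            ((continuous_const.mul hgc.abs).intervalIntegrable a b)
          intro t ht
          rw [abs_mul, abs_mul, abs_pow]
          have h1 : |x - t| ≤ b - a := by
            rw [abs_sub_le_iff]
            constructor <;> [linarith [hx.1, hx.2, ht.1, ht.2]; linarith [hx.1, hx.2, ht.1, ht.2]]
          have h2 : |x - t| ^ k ≤ (b - a) ^ k := pow_le_pow_left₀ (abs_nonneg _) h1 k
          have h3 : |(k.factorial : ℝ)⁻¹| = (k.factorial : ℝ)⁻¹ := abs_of_nonneg (by positivity)
          rw [h3]; show _ ≤ (k.factorial : ℝ)⁻¹ * (b - a) ^ k * |g t|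
          have := mul_le_mul_of_nonneg_left h2 (a := (k.factorial : ℝ)⁻¹) (by positivity)
          exact mul_le_mul_of_nonneg_right this (abs_nonneg _) |>.trans (le_of_eq (by ring))
      _ = c * I := by rw [intervalIntegral.integral_const_mul]
  -- L² bound for z - q
  have hsq : (∫ x in a..b, (z x - q.eval x) ^ 2) ≤ (b - a) * (c * I) ^ 2 := by
    have hmono := intervalIntegral.integral_mono_on (f := fun x => (z x - q.eval x) ^ 2)
      (g := fun _ => (c * I) ^ 2) (μ := volume) hab.le
      (((hzc.sub hqc).pow 2).intervalIntegrable a b) (intervalIntegrable_const)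
      (fun x hx => by
        have h := abs_le.mp (hpt x hx)
        exact sq_le_sq' h.1 h.2)
    simpa [intervalIntegral.integral_const, smul_eq_mul] using hmono
  -- orthogonality: p is the best approximation
  have horth' : (∫ x in a..b, (z x - p.eval x) ^ 2) ≤ ∫ x in a..b, (z x - q.eval x) ^ 2 := by
    have hr : (p - q).natDegree ≤ k := (Polynomial.natDegree_sub_le p q).trans (max_le hp hqdeg)
    have h0 := horth (p - q) hr
    have hi1 : IntervalIntegrable (fun x => (z x - p.eval x) ^ 2) volume a b :=
      (((hzc.sub hpc).pow 2)).intervalIntegrable a b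
    have hi2 : IntervalIntegrable (fun x => 2 * ((z x - p.eval x) * (p - q).eval x)) volume a b := by
      have hc : Continuous fun x => 2 * ((z x - p.eval x) * (p - q).eval x) := by fun_prop
      exact hc.intervalIntegrable a b
    have hi3 : IntervalIntegrable (fun x => ((p - q).eval x) ^ 2) volume a b := by
      have hc : Continuous fun x => ((p - q).eval x) ^ 2 := by fun_prop
      exact hc.intervalIntegrable a b
    have e : (∫ x in a..b, (z x - q.eval x) ^ 2)
        = (∫ x in a..b, (z x - p.eval x) ^ 2)
          + ((∫ x in a..b, 2 * ((z x - p.eval x) * (p - q).eval x))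
          + ∫ x in a..b, ((p - q).eval x) ^ 2) := by
      rw [← intervalIntegral.integral_add hi2 hi3, ← intervalIntegral.integral_add hi1 (hi2.add hi3)]
      apply intervalIntegral.integral_congr
      intro x _
      simp only [Polynomial.eval_sub]
      ring
    have e2 : (∫ x in a..b, 2 * ((z x - p.eval x) * (p - q).eval x)) = 0 := by
      rw [intervalIntegral.integral_const_mul, h0, mul_zero]
    rw [e, e2, zero_add]
    exact le_add_of_nonneg_right (intervalIntegral.integral_nonneg hab.le fun u _ => sq_nonneg _)
  -- assemble
  have harith : (b - a) * (c * I) ^ 2 ≤ ((k.factorial : ℝ)⁻¹ * (b - a) ^ (k + 1)) ^ 2 * V := by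
    have h1 : (b - a) * (c * I) ^ 2 = ((b - a) * c ^ 2) * I ^ 2 := by ring
    rw [h1]
    calc ((b - a) * c ^ 2) * I ^ 2 ≤ ((b - a) * c ^ 2) * ((b - a) * V) :=
        mul_le_mul_of_nonneg_left hI2 (by positivity)
      _ = ((k.factorial : ℝ)⁻¹ * (b - a) ^ (k + 1)) ^ 2 * V := by rw [hcdef]; ring
  have hfin : (∫ x in a..b, (z x - p.eval x) ^ 2)
      ≤ ((k.factorial : ℝ)⁻¹ * (b - a) ^ (k + 1)) ^ 2 * V :=
    horth'.trans (hsq.trans harith)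
  calc Real.sqrt (∫ x in a..b, (z x - p.eval x) ^ 2)
      ≤ Real.sqrt (((k.factorial : ℝ)⁻¹ * (b - a) ^ (k + 1)) ^ 2 * V) := Real.sqrt_le_sqrt hfin
    _ = ((k.factorial : ℝ)⁻¹ * (b - a) ^ (k + 1)) * Real.sqrt V := by
        rw [Real.sqrt_mul (sq_nonneg _), Real.sqrt_sq (by positivity)]
    _ = (k.factorial : ℝ)⁻¹ * (b - a) ^ (k + 1) * Real.sqrt V := by ring
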